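/- Let A be a finite nonempty set, P a sub-distribution on A that is not identically zero, and (ρ_a)_{a∈A} density matrices on ℂ^d. Then for every s > 0 and every positive definite matrix σ on ℂ^d with Tr σ = 1, Σ_{a∈A} P(a)^{1+s} · Tr[ σ^{-s/2} ρ_a^{1+s} σ^{-s/2} ] ≥ ( Tr[ ( Σ_{a∈A} P(a)^{1+s} · ρ_a^{1+s} )^{1/(1+s)} ] )^{1+s}. Moreover, if T := Σ_a P(a)^{1+s} ρ_a^{1+s} is positive definite, then equality holds for the particular choice σ* := T^{1/(1+s)} / Tr[ T^{1/(1+s)} ]. (Equivalently, max over normalized σ of s·H_{1+s}(A|E|ρ^{AE}‖σ) equals −(1+s)·φ(s/(1+s)|A|E|ρ^{AE}).) -/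

import Mathlib

/-!
Put `T = ∑ₐ P(a)^{1+s} ρₐ^{1+s}`, which is positive semidefinite. The sums over `a` enter only
through `T`, so the claim reads `(Tr T^{1/(1+s)})^{1+s} ≤ Tr[σ^{-s/2} T σ^{-s/2}]`. In eigenbases
`σ = U diag(μ) U*` and `T = W diag(x) W*` the right side is `∑ᵢ μᵢ^{-s} (M x)ᵢ`, where
`M = |U* W|²` (entrywise) is doubly stochastic. Concavity of `y ↦ y^{1/(1+s)}` gives
`∑ⱼ xⱼ^{1/(1+s)} ≤ ∑ᵢ (M x)ᵢ^{1/(1+s)}`, and Jensen's inequality once more, now with the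
probability weights `μ`, gives `(∑ᵢ tᵢ^{1/(1+s)})^{1+s} ≤ ∑ᵢ μᵢ^{-s} tᵢ` for `t = M x`. For
`σ = T^{1/(1+s)} / Tr T^{1/(1+s)}` the two matrices share the eigenbasis `W` and the right side
is computed directly.
-/

open scoped BigOperators ComplexOrder

/-- Matrix power of a Hermitian matrix, obtained by applying `t ↦ t ^ r`
(real power) to the eigenvalues; junk value `0` for non-Hermitian input. -/
noncomputable def mpow {d : ℕ} (A : Matrix (Fin d) (Fin d) ℂ) (r : ℝ) :
    Matrix (Fin d) (Fin d) ℂ :=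
  if hA : A.IsHermitian then
    (hA.eigenvectorUnitary : Matrix (Fin d) (Fin d) ℂ) *
      Matrix.diagonal (fun i => ((hA.eigenvalues i ^ r : ℝ) : ℂ)) *
      star (hA.eigenvectorUnitary : Matrix (Fin d) (Fin d) ℂ)
  else 0

open Matrix Polynomial

section UnitaryConj

variable {n : Type*} [Fintype n] [DecidableEq n] {U : Matrix n n ℂ}

lemma aeval_diagonal (v : n → ℂ) (q : ℂ[X]) :
    aeval (diagonal v) q = diagonal fun i => q.eval (v i) := by
  simpa [aeval_pi_apply] using aeval_algHom_apply (diagonalAlgHom ℂ (n := n) (α := ℂ)) v q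

lemma aeval_unitary_conj_diagonal (hU : U ∈ unitaryGroup n ℂ) (v : n → ℂ) (q : ℂ[X]) :
    aeval (U * diagonal v * star U) q = U * diagonal (fun i => q.eval (v i)) * star U := by
  simpa [aeval_diagonal] using
    aeval_algHom_apply (Unitary.conjStarAlgAut ℂ (Matrix n n ℂ) ⟨U, hU⟩) (diagonal v) q

lemma unitary_conj_diagonal_mul (hU : U ∈ unitaryGroup n ℂ) (v w : n → ℂ) :
    U * diagonal v * star U * (U * diagonal w * star U) =
      U * diagonal (fun i => v i * w i) * star U := by
  simpa [diagonal_mul_diagonal] using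
    (map_mul (Unitary.conjStarAlgAut ℂ (Matrix n n ℂ) ⟨U, hU⟩) (diagonal v) (diagonal w)).symm

lemma trace_unitary_conj (hU : U ∈ unitaryGroup n ℂ) (M : Matrix n n ℂ) :
    (U * M * star U).trace = M.trace := by
  rw [trace_mul_cycle, mem_unitaryGroup_iff'.mp hU, one_mul]

lemma re_trace_unitary_conj_diagonal (hU : U ∈ unitaryGroup n ℂ) (g : n → ℝ) :
    (U * diagonal (fun i => (g i : ℂ)) * star U).trace.re = ∑ i, g i := by
  rw [trace_unitary_conj hU, trace_diagonal, ← Complex.ofReal_sum, Complex.ofReal_re]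

lemma mul_diagonal_mul_star_apply_self (Q : Matrix n n ℂ) (x : n → ℝ) (i : n) :
    (Q * diagonal (fun j => (x j : ℂ)) * star Q) i i = ((Q.map Complex.normSq *ᵥ x) i : ℂ) := by
  rw [mul_apply]
  simp only [mul_diagonal, star_apply, mulVec, dotProduct, map_apply, Complex.ofReal_sum,
    Complex.ofReal_mul, RCLike.star_def]
  refine Finset.sum_congr rfl fun j _ => ?_
  rw [Complex.normSq_eq_conj_mul_self]
  ring

lemma map_normSq_mem_doublyStochastic {Q : Matrix n n ℂ} (hQ : Q ∈ unitaryGroup n ℂ) :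
    Q.map Complex.normSq ∈ doublyStochastic ℝ n := by
  have row_sum {Q : Matrix n n ℂ} (hQ : Q ∈ unitaryGroup n ℂ) (i : n) :
      ∑ j, Complex.normSq (Q i j) = 1 := by
    have := mul_diagonal_mul_star_apply_self Q 1 i
    simp only [Pi.one_apply, Complex.ofReal_one, diagonal_one, mul_one,
      mem_unitaryGroup_iff.mp hQ, one_apply_eq, mulVec, dotProduct, map_apply] at this
    exact_mod_cast this.symm
  refine mem_doublyStochastic_iff_sum.mpr ⟨fun i j => Complex.normSq_nonneg _, row_sum hQ, ?_⟩
  intro j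
  simpa [star_apply] using row_sum (Unitary.star_mem hQ) j

lemma re_trace_unitary_conj_diagonal_sandwich {W : Matrix n n ℂ} (hU : U ∈ unitaryGroup n ℂ)
    (ν x : n → ℝ) :
    (U * diagonal (fun i => (ν i : ℂ)) * star U * (W * diagonal (fun j => (x j : ℂ)) * star W) *
      (U * diagonal (fun i => (ν i : ℂ)) * star U)).trace.re =
      ∑ i, ν i ^ 2 * ((star U * W).map Complex.normSq *ᵥ x) i := by
  have hconj : U * diagonal (fun i => (ν i : ℂ)) * star U *
      (W * diagonal (fun j => (x j : ℂ)) * star W) * (U * diagonal (fun i => (ν i : ℂ)) * star U) =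
      U * (diagonal (fun i => (ν i : ℂ)) *
        (star U * W * diagonal (fun j => (x j : ℂ)) * star (star U * W)) *
        diagonal (fun i => (ν i : ℂ))) * star U := by
    simp only [star_mul, star_star, Matrix.mul_assoc]
  rw [hconj, trace_unitary_conj hU, trace, Complex.re_sum]
  refine Finset.sum_congr rfl fun i _ => ?_
  rw [diag_apply, mul_diagonal, diagonal_mul, mul_diagonal_mul_star_apply_self]
  rw [← Complex.ofReal_mul, ← Complex.ofReal_mul, Complex.ofReal_re]
  ring

lemma re_trace_mul_sum_smul_mul {ι : Type*} [Fintype ι] (X Y : Matrix n n ℂ) (c : ι → ℝ)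
    (M : ι → Matrix n n ℂ) :
    (X * (∑ a, c a • M a) * Y).trace.re = ∑ a, c a * (X * M a * Y).trace.re := by
  simp only [Matrix.mul_sum, Matrix.sum_mul, mul_smul_comm, smul_mul_assoc, trace_sum,
    trace_smul, Complex.re_sum, Complex.real_smul, Complex.re_ofReal_mul]

lemma Matrix.IsHermitian.eq_unitary_conj_diagonal {A : Matrix n n ℂ} (hA : A.IsHermitian) :
    A = (hA.eigenvectorUnitary : Matrix n n ℂ) * diagonal (fun i => (hA.eigenvalues i : ℂ)) *
      star (hA.eigenvectorUnitary : Matrix n n ℂ) := by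
  simpa [Function.comp_def] using hA.spectral_theorem

end UnitaryConj

section Convexity

variable {n : Type*} [Fintype n]

lemma sum_rpow_le_sum_rpow_mulVec [DecidableEq n] {M : Matrix n n ℝ}
    (hM : M ∈ doublyStochastic ℝ n) {x : n → ℝ} (hx : ∀ j, 0 ≤ x j) {q : ℝ} (hq₀ : 0 ≤ q)
    (hq₁ : q ≤ 1) :
    ∑ j, x j ^ q ≤ ∑ i, (M *ᵥ x) i ^ q := by
  obtain ⟨hM₀, hrow, hcol⟩ := mem_doublyStochastic_iff_sum.mp hM
  calc ∑ j, x j ^ q = ∑ i, ∑ j, M i j * x j ^ q := by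
        rw [Finset.sum_comm]
        simp only [← Finset.sum_mul, hcol, one_mul]
    _ ≤ ∑ i, (M *ᵥ x) i ^ q := Finset.sum_le_sum fun i _ =>
        (Real.concaveOn_rpow hq₀ hq₁).le_map_sum (fun j _ => hM₀ i j) (hrow i) fun j _ => hx j

lemma rpow_sum_rpow_le_sum_rpow_neg_mul {μ t : n → ℝ} (hμ : ∀ i, 0 < μ i)
    (hμ₁ : ∑ i, μ i = 1) (ht : ∀ i, 0 ≤ t i) {s : ℝ} (hs : 0 ≤ s) :
    (∑ i, t i ^ (1 / (1 + s))) ^ (1 + s) ≤ ∑ i, μ i ^ (-s) * t i := by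
  have hp : 0 < 1 + s := by linarith
  have jensen := (Real.concaveOn_rpow (p := 1 / (1 + s)) (by positivity)
    ((div_le_one hp).mpr (by linarith))).le_map_sum (t := Finset.univ) (w := μ)
    (p := fun i => μ i ^ (-(1 + s)) * t i) (fun i _ => (hμ i).le) hμ₁
    (fun i _ => mul_nonneg (Real.rpow_nonneg (hμ i).le _) (ht i))
  have hweighted_point (i : n) :
      μ i • (μ i ^ (-(1 + s)) * t i) ^ (1 / (1 + s)) = t i ^ (1 / (1 + s)) := by
    rw [smul_eq_mul, Real.mul_rpow (Real.rpow_nonneg (hμ i).le _) (ht i),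
      ← Real.rpow_mul (hμ i).le, neg_mul, mul_one_div_cancel hp.ne', ← mul_assoc,
      Real.rpow_neg_one, mul_inv_cancel₀ (hμ i).ne', one_mul]
  have hweighted_value (i : n) : μ i • (μ i ^ (-(1 + s)) * t i) = μ i ^ (-s) * t i := by
    rw [smul_eq_mul, ← mul_assoc, show -s = 1 + -(1 + s) by ring, Real.rpow_add (hμ i),
      Real.rpow_one]
  simp only [hweighted_point, hweighted_value] at jensen
  calc (∑ i, t i ^ (1 / (1 + s))) ^ (1 + s)
      ≤ ((∑ i, μ i ^ (-s) * t i) ^ (1 / (1 + s))) ^ (1 + s) :=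
        Real.rpow_le_rpow (Finset.sum_nonneg fun i _ => Real.rpow_nonneg (ht i) _) jensen hp.le
    _ = ∑ i, μ i ^ (-s) * t i := by
        rw [← Real.rpow_mul (Finset.sum_nonneg fun i _ =>
          mul_nonneg (Real.rpow_nonneg (hμ i).le _) (ht i)), one_div_mul_cancel hp.ne',
          Real.rpow_one]

end Convexity

lemma exists_complex_polynomial_eval_ofReal (S : Finset ℝ) (f : ℝ → ℝ) :
    ∃ q : ℂ[X], ∀ x ∈ S, q.eval (x : ℂ) = f x := by
  refine ⟨(Lagrange.interpolate S id f).map (algebraMap ℝ ℂ), fun x hx => ?_⟩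
  have := Lagrange.eval_interpolate_at_node f (Set.injOn_id (S : Set ℝ)) hx
  rw [← Complex.coe_algebraMap, eval_map_algebraMap, aeval_algebraMap_apply, coe_aeval_eq_eval]
  simp_all

section MatrixPower

variable {d : ℕ}

/-- Both sides equal `aeval A q` for a polynomial `q` interpolating `t ↦ t ^ r` on both
spectra, so `mpow` does not depend on the choice of eigenbasis. -/
lemma mpow_unitary_conj_diagonal {A U : Matrix (Fin d) (Fin d) ℂ}
    (hU : U ∈ unitaryGroup (Fin d) ℂ) {g : Fin d → ℝ}
    (hA : A = U * diagonal (fun i => (g i : ℂ)) * star U) (r : ℝ) :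
    mpow A r = U * diagonal (fun i => ((g i ^ r : ℝ) : ℂ)) * star U := by
  have hH : A.IsHermitian := by
    rw [hA, star_eq_conjTranspose]
    exact isHermitian_mul_mul_conjTranspose _ (isHermitian_diagonal_of_self_adjoint _
      (by ext i; simp [Complex.conj_ofReal]))
  classical
  obtain ⟨q, hq⟩ := exists_complex_polynomial_eval_ofReal
    (Finset.univ.image hH.eigenvalues ∪ Finset.univ.image g) (· ^ r)
  have h_eig : aeval A q = mpow A r := by
    conv_lhs => rw [hH.eq_unitary_conj_diagonal]
    rw [mpow, dif_pos hH, aeval_unitary_conj_diagonal (SetLike.coe_mem _)]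
    exact congrArg (_ * · * _) (congrArg diagonal (funext fun i => hq _ (by simp)))
  rw [← h_eig, hA, aeval_unitary_conj_diagonal hU]
  exact congrArg (_ * · * _) (congrArg diagonal (funext fun i => hq _ (by simp)))

lemma mpow_posSemidef {A : Matrix (Fin d) (Fin d) ℂ} (hA : A.PosSemidef) (r : ℝ) :
    (mpow A r).PosSemidef := by
  rw [mpow, dif_pos hA.1, star_eq_conjTranspose]
  refine (posSemidef_diagonal_iff.mpr fun i => ?_).mul_mul_conjTranspose_same _
  exact Complex.zero_le_real.mpr (Real.rpow_nonneg (hA.eigenvalues_nonneg i) r)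

theorem rpow_re_trace_mpow_le_re_trace_sandwich {T σ : Matrix (Fin d) (Fin d) ℂ}
    (hT : T.PosSemidef) (hσ : σ.PosDef) (hσ₁ : σ.trace = 1) {s : ℝ} (hs : 0 ≤ s) :
    (mpow T (1 / (1 + s))).trace.re ^ (1 + s) ≤
      (mpow σ (-s / 2) * T * mpow σ (-s / 2)).trace.re := by
  obtain ⟨U, hU, μ, hμ, rfl⟩ : ∃ U ∈ unitaryGroup (Fin d) ℂ, ∃ μ : Fin d → ℝ,
      (∀ i, 0 < μ i) ∧ σ = U * diagonal (fun i => (μ i : ℂ)) * star U :=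
    ⟨_, SetLike.coe_mem _, _, hσ.eigenvalues_pos, hσ.1.eq_unitary_conj_diagonal⟩
  obtain ⟨W, hW, x, hx, rfl⟩ : ∃ W ∈ unitaryGroup (Fin d) ℂ, ∃ x : Fin d → ℝ,
      (∀ i, 0 ≤ x i) ∧ T = W * diagonal (fun i => (x i : ℂ)) * star W :=
    ⟨_, SetLike.coe_mem _, _, hT.eigenvalues_nonneg, hT.1.eq_unitary_conj_diagonal⟩
  set M := (star U * W).map Complex.normSq
  have hμ₁ : ∑ i, μ i = 1 := by
    rw [← re_trace_unitary_conj_diagonal hU, hσ₁, Complex.one_re]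
  have hM : M ∈ doublyStochastic ℝ (Fin d) :=
    map_normSq_mem_doublyStochastic (mul_mem (Unitary.star_mem hU) hW)
  have hMx (i : Fin d) : 0 ≤ (M *ᵥ x) i := by
    simp only [mulVec, dotProduct]
    exact Finset.sum_nonneg fun j _ => mul_nonneg (nonneg_of_mem_doublyStochastic hM) (hx j)
  rw [mpow_unitary_conj_diagonal hU rfl, mpow_unitary_conj_diagonal hW rfl,
    re_trace_unitary_conj_diagonal hW, re_trace_unitary_conj_diagonal_sandwich hU]
  calc (∑ j, x j ^ (1 / (1 + s))) ^ (1 + s)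
      ≤ (∑ i, (M *ᵥ x) i ^ (1 / (1 + s))) ^ (1 + s) := by
        gcongr ?_ ^ _
        · exact Finset.sum_nonneg fun j _ => Real.rpow_nonneg (hx j) _
        · exact sum_rpow_le_sum_rpow_mulVec hM hx (by positivity)
            ((div_le_one (by positivity)).mpr (by linarith))
    _ ≤ ∑ i, μ i ^ (-s) * (M *ᵥ x) i := rpow_sum_rpow_le_sum_rpow_neg_mul hμ hμ₁ hMx hs
    _ = ∑ i, (μ i ^ (-s / 2)) ^ 2 * (M *ᵥ x) i := by
        refine Finset.sum_congr rfl fun i _ => ?_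
        rw [← Real.rpow_natCast, ← Real.rpow_mul (hμ i).le]
        norm_num

noncomputable def normalizedMpow (T : Matrix (Fin d) (Fin d) ℂ) (r : ℝ) :
    Matrix (Fin d) (Fin d) ℂ :=
  ((mpow T r).trace.re)⁻¹ • mpow T r

theorem re_trace_sandwich_normalizedMpow {T : Matrix (Fin d) (Fin d) ℂ} (hT : T.PosDef) {s : ℝ}
    (hs : 0 ≤ s) :
    (mpow (normalizedMpow T (1 / (1 + s))) (-s / 2) * T *
      mpow (normalizedMpow T (1 / (1 + s))) (-s / 2)).trace.re =
      (mpow T (1 / (1 + s))).trace.re ^ (1 + s) := by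
  obtain ⟨W, hW, x, hx, rfl⟩ : ∃ W ∈ unitaryGroup (Fin d) ℂ, ∃ x : Fin d → ℝ,
      (∀ i, 0 < x i) ∧ T = W * diagonal (fun i => (x i : ℂ)) * star W :=
    ⟨_, SetLike.coe_mem _, _, hT.eigenvalues_pos, hT.1.eq_unitary_conj_diagonal⟩
  have hmpow := mpow_unitary_conj_diagonal hW (g := x) rfl (1 / (1 + s))
  have htrace : (mpow (W * diagonal (fun i => (x i : ℂ)) * star W) (1 / (1 + s))).trace.re =
      ∑ i, x i ^ (1 / (1 + s)) := by
    rw [hmpow, re_trace_unitary_conj_diagonal hW]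
  set c := ∑ i, x i ^ (1 / (1 + s))
  have hc : 0 ≤ c := Finset.sum_nonneg fun i _ => (Real.rpow_pos_of_pos (hx i) _).le
  have hnormalized : normalizedMpow (W * diagonal (fun i => (x i : ℂ)) * star W) (1 / (1 + s)) =
      W * diagonal (fun i => ((c⁻¹ * x i ^ (1 / (1 + s)) : ℝ) : ℂ)) * star W := by
    rw [normalizedMpow, htrace, hmpow, ← smul_mul_assoc, ← mul_smul_comm, ← diagonal_smul]
    simp only [Complex.ofReal_mul, Pi.smul_def, Complex.real_smul]
  have hweight (i : Fin d) :
      (c⁻¹ * x i ^ (1 / (1 + s))) ^ (-s / 2) * x i * (c⁻¹ * x i ^ (1 / (1 + s))) ^ (-s / 2) =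
        c ^ s * x i ^ (1 / (1 + s)) := by
    have hxq : 0 < x i ^ (1 / (1 + s)) := Real.rpow_pos_of_pos (hx i) _
    have hc : 0 < c := hxq.trans_le
      (Finset.single_le_sum (fun j _ => (Real.rpow_pos_of_pos (hx j) _).le) (Finset.mem_univ i))
    rw [mul_right_comm, ← Real.rpow_add (mul_pos (inv_pos.mpr hc) hxq),
      Real.mul_rpow (inv_pos.mpr hc).le hxq.le, Real.inv_rpow hc.le,
      ← Real.rpow_neg hc.le, ← Real.rpow_mul (hx i).le, mul_assoc, ← Real.rpow_add_one (hx i).ne']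
    have : 1 + s ≠ 0 := by linarith
    congr 2
    · ring
    · field_simp
      ring
  rw [mpow_unitary_conj_diagonal hW hnormalized, unitary_conj_diagonal_mul hW,
    unitary_conj_diagonal_mul hW, htrace]
  simp only [← Complex.ofReal_mul]
  rw [re_trace_unitary_conj_diagonal hW, Finset.sum_congr rfl fun i _ => hweight i,
    ← Finset.mul_sum, Real.rpow_add' hc (by linarith), Real.rpow_one, mul_comm]

end MatrixPower

theorem stmt_19_general {A : Type*} [Fintype A] {d : ℕ}
    (P : A → ℝ) (hP0 : ∀ a, 0 ≤ P a)
    (ρ : A → Matrix (Fin d) (Fin d) ℂ)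
    (hρ : ∀ a, (ρ a).PosSemidef)
    (s : ℝ) (hs : 0 < s) :
    (∀ σ : Matrix (Fin d) (Fin d) ℂ, σ.PosDef → σ.trace = 1 →
      ((mpow (∑ a, (P a ^ (1 + s)) • mpow (ρ a) (1 + s)) (1 / (1 + s))).trace.re) ^ (1 + s) ≤
        ∑ a, P a ^ (1 + s) *
          (mpow σ (-s / 2) * mpow (ρ a) (1 + s) * mpow σ (-s / 2)).trace.re) ∧
    ((∑ a, (P a ^ (1 + s)) • mpow (ρ a) (1 + s)).PosDef →
      ∑ a, P a ^ (1 + s) *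
          (mpow (((mpow (∑ a', (P a' ^ (1 + s)) • mpow (ρ a') (1 + s))
                  (1 / (1 + s))).trace.re)⁻¹ •
                mpow (∑ a', (P a' ^ (1 + s)) • mpow (ρ a') (1 + s)) (1 / (1 + s)))
              (-s / 2) *
            mpow (ρ a) (1 + s) *
            mpow (((mpow (∑ a', (P a' ^ (1 + s)) • mpow (ρ a') (1 + s))
                  (1 / (1 + s))).trace.re)⁻¹ •
                mpow (∑ a', (P a' ^ (1 + s)) • mpow (ρ a') (1 + s)) (1 / (1 + s)))
              (-s / 2)).trace.re =
        ((mpow (∑ a, (P a ^ (1 + s)) • mpow (ρ a) (1 + s)) (1 / (1 + s))).trace.re) ^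
          (1 + s)) := by
  have hT : (∑ a, P a ^ (1 + s) • mpow (ρ a) (1 + s)).PosSemidef :=
    posSemidef_sum _ fun a _ => (mpow_posSemidef (hρ a) _).smul (Real.rpow_nonneg (hP0 a) _)
  refine ⟨fun σ hσ hσ₁ => ?_, fun hT_pos => ?_⟩
  · simpa only [re_trace_mul_sum_smul_mul] using
      rpow_re_trace_mpow_le_re_trace_sandwich hT hσ hσ₁ hs.le
  · simpa only [re_trace_mul_sum_smul_mul, normalizedMpow] using
      re_trace_sandwich_normalizedMpow hT_pos hs.le

theorem stmt_19 {A : Type*} [Fintype A] [Nonempty A] {d : ℕ} (hd : 1 ≤ d)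
    (P : A → ℝ) (hP0 : ∀ a, 0 ≤ P a) (hP1 : ∑ a, P a ≤ 1) (hPne : P ≠ 0)
    (ρ : A → Matrix (Fin d) (Fin d) ℂ)
    (hρ : ∀ a, (ρ a).PosSemidef) (htr : ∀ a, (ρ a).trace = 1)
    (s : ℝ) (hs : 0 < s) :
    (∀ σ : Matrix (Fin d) (Fin d) ℂ, σ.PosDef → σ.trace = 1 →
      ((mpow (∑ a, (P a ^ (1 + s)) • mpow (ρ a) (1 + s)) (1 / (1 + s))).trace.re) ^ (1 + s) ≤
        ∑ a, P a ^ (1 + s) *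
          (mpow σ (-s / 2) * mpow (ρ a) (1 + s) * mpow σ (-s / 2)).trace.re) ∧
    ((∑ a, (P a ^ (1 + s)) • mpow (ρ a) (1 + s)).PosDef →
      ∑ a, P a ^ (1 + s) *
          (mpow (((mpow (∑ a', (P a' ^ (1 + s)) • mpow (ρ a') (1 + s))
                  (1 / (1 + s))).trace.re)⁻¹ •
                mpow (∑ a', (P a' ^ (1 + s)) • mpow (ρ a') (1 + s)) (1 / (1 + s)))
              (-s / 2) *
            mpow (ρ a) (1 + s) *
            mpow (((mpow (∑ a', (P a' ^ (1 + s)) • mpow (ρ a') (1 + s))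
                  (1 / (1 + s))).trace.re)⁻¹ •
                mpow (∑ a', (P a' ^ (1 + s)) • mpow (ρ a') (1 + s)) (1 / (1 + s)))
              (-s / 2)).trace.re =
        ((mpow (∑ a, (P a ^ (1 + s)) • mpow (ρ a) (1 + s)) (1 / (1 + s))).trace.re) ^
          (1 + s)) :=
  stmt_19_general P hP0 ρ hρ s hs
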